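/- arXiv:1205.0861 — 3 statements merged into one kernel-verified Lean document; each statement's English description precedes it below -/
import Mathlib

section
/- Let γ: ℝ → ℝ² be the line γ(s) = (s,0). If f ∈ C_c(ℝ²) satisfies R_γ f(r,s) = 0 for all r > 0 and all s, and f is even with respect to reflection about the line (f(x₁,−x₂) = f(x₁,x₂)), then the Fourier transform of the function g(x) := f(x) restricted to the upper half plane, extended evenly, has circular means determined by f; in particular, for f even and continuous with R_γ f ≡ 0, f ≡ 0. -/
/-!
Polar coordinates about `(s, 0)` turn the vanishing circular means into
`∫ f y * w (|y - (s, 0)|²) dy = 0` for every radial weight `w`. Taking `w = exp (b ·)` and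
completing the square, `f` is orthogonal to the constants and to every `exp (a y₁ + b |y|²)` with
`b > 0`. As functions of `(y₁, |y|²)` these span an algebra that separates points, and an even `f`
is a continuous function of `(y₁, |y|²)`; by Stone–Weierstrass `f` is therefore a uniform limit,
on its support, of functions it is orthogonal to, so `∫ f² = 0`.
-/

open MeasureTheory Real intervalIntegral Set

theorem integral_eq_zero_of_forall_integral_circle_eq_zero {E : Type*} [NormedAddCommGroup E]
    [NormedSpace ℝ E] (g : ℝ × ℝ → E)
    (h : ∀ r > (0 : ℝ), ∫ θ in 0..2 * π, g (r * cos θ, r * sin θ) = 0) :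
    ∫ x, g x = 0 := by
  rw [← integral_comp_polarCoord_symm, polarCoord_target, Measure.volume_eq_prod]
  by_cases hg : IntegrableOn (fun p : ℝ × ℝ ↦ p.1 • g (polarCoord.symm p))
      (Ioi 0 ×ˢ Ioo (-π) π) (volume.prod volume)
  · rw [setIntegral_prod _ hg]
    refine setIntegral_eq_zero_of_forall_eq_zero fun r (hr : 0 < r) ↦ ?_
    have hper : Function.Periodic (fun θ ↦ g (r * cos θ, r * sin θ)) (2 * π) := fun θ ↦ by
      simp only [cos_add_two_pi, sin_add_two_pi]
    have hcircle : ∫ θ in -π..π, g (r * cos θ, r * sin θ) = 0 := by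
      have := hper.intervalIntegral_add_eq (-π) 0
      rwa [show -π + 2 * π = π by ring, zero_add, h r hr] at this
    simp only [polarCoord_symm_apply]
    rw [MeasureTheory.integral_smul, ← integral_Ioc_eq_integral_Ioo,
      ← integral_of_le (by linarith [pi_pos]), hcircle, smul_zero]
  · -- a non-integrable function has integral `0` by convention
    exact integral_undef hg

/-- The circular transform `R_γ f (r, s)` of `f` over the circle of radius `r` centred at `(s, 0)`,
in arc-length measure. -/
noncomputable def circularTransform (f : ℝ × ℝ → ℝ) (r s : ℝ) : ℝ :=
  ∫ θ in 0..2 * π, f (s + r * cos θ, r * sin θ) * r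

theorem integral_mul_radial_eq_zero {f : ℝ × ℝ → ℝ}
    (hf : ∀ r > (0 : ℝ), ∀ s, circularTransform f r s = 0) (w : ℝ → ℝ) (s : ℝ) :
    ∫ y, f y * w ((y.1 - s) ^ 2 + y.2 ^ 2) = 0 := by
  rw [← integral_add_left_eq_self _ ((s, 0) : ℝ × ℝ)]
  refine integral_eq_zero_of_forall_integral_circle_eq_zero _ fun r hr ↦ ?_
  have hmean : ∫ θ in 0..2 * π, f (s + r * cos θ, r * sin θ) = 0 := by
    have := hf r hr s
    rw [circularTransform, intervalIntegral.integral_mul_const, mul_eq_zero] at this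
    exact this.resolve_right hr.ne'
  have hradius (θ : ℝ) : (r * cos θ) ^ 2 + (r * sin θ) ^ 2 = r ^ 2 := by
    rw [mul_pow, mul_pow, ← mul_add, cos_sq_add_sin_sq, mul_one]
  simp only [Prod.mk_add_mk, zero_add, add_sub_cancel_left, hradius]
  rw [intervalIntegral.integral_mul_const, hmean, zero_mul]

theorem integral_mul_exp_eq_zero {f : ℝ × ℝ → ℝ}
    (hf : ∀ r > (0 : ℝ), ∀ s, circularTransform f r s = 0) (a : ℝ) {b : ℝ} (hb : b ≠ 0) :
    ∫ y, f y * exp (a * y.1 + b * (y.1 ^ 2 + y.2 ^ 2)) = 0 := by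
  -- completing the square
  set s := -a / (2 * b)
  have hsquare (y : ℝ × ℝ) : f y * exp (b * ((y.1 - s) ^ 2 + y.2 ^ 2)) =
      f y * exp (a * y.1 + b * (y.1 ^ 2 + y.2 ^ 2)) * exp (b * s ^ 2) := by
    have hcentre : b * s * 2 = -a := by
      simp only [s]
      field_simp
    rw [mul_assoc, ← exp_add]
    congr 2
    linear_combination (-y.1) * hcentre
  have := integral_mul_radial_eq_zero hf (fun t ↦ exp (b * t)) s
  simp only [hsquare, MeasureTheory.integral_mul_const] at this
  exact (mul_eq_zero.mp this).resolve_right (exp_pos _).ne'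

theorem Algebra.adjoin_toSubmodule_le_of_mul_mem {R A : Type*} [CommSemiring R] [Semiring A]
    [Algebra R A] {s : Set A} (hs : ∀ x ∈ s, ∀ y ∈ s, x * y ∈ s) {p : Submodule R A}
    (h1 : 1 ∈ p) (hsp : s ⊆ p) : Subalgebra.toSubmodule (Algebra.adjoin R s) ≤ p := by
  rw [Algebra.adjoin_eq_span, Submodule.span_le]
  intro x hx
  have hx' : x = 1 ∨ x ∈ s := by
    induction hx using Submonoid.closure_induction with
    | mem x hx => exact .inr hx
    | one => exact .inl rfl
    | mul x y _ _ hx hy =>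
      rcases hx with rfl | hx
      · simpa using hy
      rcases hy with rfl | hy
      · simpa using Or.inr hx
      exact .inr (hs x hx y hy)
  rcases hx' with rfl | hx'
  exacts [h1, hsp hx']

theorem integral_mul_comp_eq_zero_of_mem_adjoin {X Y : Type*} [TopologicalSpace X]
    [MeasurableSpace X] [OpensMeasurableSpace X] [TopologicalSpace Y] {μ : Measure X}
    [IsFiniteMeasureOnCompacts μ] {f : X → ℝ} (hf : Continuous f) (hfs : HasCompactSupport f)
    {ψ : X → Y} (hψ : Continuous ψ) {s : Set C(Y, ℝ)} (hs : ∀ e ∈ s, ∀ e' ∈ s, e * e' ∈ s)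
    (h1 : ∫ x, f x ∂μ = 0) (hsf : ∀ e ∈ s, ∫ x, f x * e (ψ x) ∂μ = 0) {g : C(Y, ℝ)}
    (hg : g ∈ Algebra.adjoin ℝ s) : ∫ x, f x * g (ψ x) ∂μ = 0 := by
  have hint (g : C(Y, ℝ)) : Integrable (fun x ↦ f x * g (ψ x)) μ :=
    (hf.mul (g.continuous.comp hψ)).integrable_of_hasCompactSupport hfs.mul_right
  let p : Submodule ℝ C(Y, ℝ) :=
    { carrier := {g | ∫ x, f x * g (ψ x) ∂μ = 0}
      add_mem' := fun {g g'} (hg : ∫ x, f x * g (ψ x) ∂μ = 0) (hg' : ∫ x, _ ∂μ = 0) ↦ by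
        show ∫ x, f x * (g (ψ x) + g' (ψ x)) ∂μ = 0
        simp only [mul_add]
        rw [integral_add (hint g) (hint g'), hg, hg', add_zero]
      zero_mem' := by simp
      smul_mem' := fun c g (hg : ∫ x, f x * g (ψ x) ∂μ = 0) ↦ by
        show ∫ x, f x * (c * g (ψ x)) ∂μ = 0
        simp only [mul_left_comm (f _) c]
        rw [MeasureTheory.integral_const_mul, hg, mul_zero] }
  have hp1 : (1 : C(Y, ℝ)) ∈ p := by
    show ∫ x, f x * 1 ∂μ = 0
    simpa using h1
  exact Algebra.adjoin_toSubmodule_le_of_mul_mem hs hp1 hsf hg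

noncomputable def expLinear (a b : ℝ) : C(ℝ × ℝ, ℝ) :=
  ⟨fun p ↦ exp (a * p.1 + b * p.2), by fun_prop⟩

theorem expLinear_mul_expLinear (a b a' b' : ℝ) :
    expLinear a b * expLinear a' b' = expLinear (a + a') (b + b') := by
  ext p
  simp only [expLinear, ContinuousMap.mul_apply, ContinuousMap.coe_mk, ← exp_add]
  ring_nf

/-- Requiring `0 < b` keeps the set closed under products while excluding `b = 0`, where the
square in `integral_mul_exp_eq_zero` cannot be completed. -/
def expLinearSet : Set C(ℝ × ℝ, ℝ) := {expLinear a b | (a : ℝ) (b : ℝ) (_ : 0 < b)}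

theorem expLinearSet_mul_mem {e e' : C(ℝ × ℝ, ℝ)} (he : e ∈ expLinearSet)
    (he' : e' ∈ expLinearSet) : e * e' ∈ expLinearSet := by
  obtain ⟨a, b, hb, rfl⟩ := he
  obtain ⟨a', b', hb', rfl⟩ := he'
  exact ⟨a + a', b + b', add_pos hb hb', (expLinear_mul_expLinear a b a' b').symm⟩

theorem separatesPoints_adjoin_expLinearSet :
    (Algebra.adjoin ℝ expLinearSet).SeparatesPoints := by
  intro p q hpq
  have hmem (a b : ℝ) (hb : 0 < b) : ⇑(expLinear a b) ∈
      (fun g : C(ℝ × ℝ, ℝ) ↦ ⇑g) '' (Algebra.adjoin ℝ expLinearSet) :=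
    ⟨_, Algebra.subset_adjoin ⟨a, b, hb, rfl⟩, rfl⟩
  by_cases h2 : p.2 = q.2
  · have h1 : p.1 ≠ q.1 := fun h1 ↦ hpq (Prod.ext h1 h2)
    exact ⟨_, hmem 1 1 one_pos, by simpa [expLinear, h2] using h1⟩
  · exact ⟨_, hmem 0 1 one_pos, by simpa [expLinear] using h2⟩

theorem exists_mem_subalgebra_abs_sub_lt_of_even {A : Subalgebra ℝ C(ℝ × ℝ, ℝ)}
    (hA : A.SeparatesPoints) {f : ℝ × ℝ → ℝ} (hf : Continuous f) (hfs : HasCompactSupport f)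
    (heven : ∀ y : ℝ × ℝ, f (y.1, -y.2) = f y) {ε : ℝ} (hε : 0 < ε) :
    ∃ g ∈ A, ∀ y ∈ tsupport f, |f y - g (y.1, y.1 ^ 2 + y.2 ^ 2)| < ε := by
  -- an even `f` is a continuous function of `(y.1, y.1 ^ 2 + y.2 ^ 2)`
  let F : C(ℝ × ℝ, ℝ) := ⟨fun p ↦ f (p.1, √(p.2 - p.1 ^ 2)), by fun_prop⟩
  have hF (y : ℝ × ℝ) : F (y.1, y.1 ^ 2 + y.2 ^ 2) = f y := by
    simp only [F, ContinuousMap.coe_mk, add_sub_cancel_left, sqrt_sq_eq_abs]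
    rcases abs_choice y.2 with h | h <;> rw [h]
    exact heven y
  have hK : IsCompact ((fun y : ℝ × ℝ ↦ (y.1, y.1 ^ 2 + y.2 ^ 2)) '' tsupport f) :=
    hfs.image (by fun_prop)
  obtain ⟨g, hgA, hg⟩ :=
    ContinuousMap.exists_mem_subalgebra_near_continuous_of_isCompact_of_separatesPoints hA F hK hε
  refine ⟨g, hgA, fun y hy ↦ ?_⟩
  rw [← hF y, abs_sub_comm]
  exact hg _ (mem_image_of_mem _ hy)

theorem eq_zero_of_forall_integral_mul_eq_zero_of_approx {X : Type*} [TopologicalSpace X]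
    [MeasurableSpace X] [OpensMeasurableSpace X] {μ : Measure X} [IsFiniteMeasureOnCompacts μ]
    [μ.IsOpenPosMeasure] {f : X → ℝ} (hf : Continuous f) (hfs : HasCompactSupport f)
    (h : ∀ ε > 0, ∃ e : X → ℝ, Continuous e ∧ ∫ x, f x * e x ∂μ = 0 ∧
      ∀ x ∈ tsupport f, |f x - e x| < ε) :
    f = 0 := by
  by_contra hne
  obtain ⟨x₀, hx₀⟩ : ∃ x, f x ≠ 0 := by simpa [funext_iff] using hne
  set I := ∫ x, f x * f x ∂μ
  have hI : 0 < I := (hf.mul hf).integral_pos_of_hasCompactSupport_nonneg_nonzero hfs.mul_right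
    (fun x ↦ mul_self_nonneg (f x)) (mul_self_ne_zero.mpr hx₀)
  set C := ∫ x, |f x| ∂μ
  have hC : 0 ≤ C := integral_nonneg fun _ ↦ abs_nonneg _
  obtain ⟨e, he, horth, happrox⟩ := h (I / (C + 1)) (by positivity)
  have hint (e : X → ℝ) (he : Continuous e) : Integrable (fun x ↦ f x * e x) μ :=
    (hf.mul he).integrable_of_hasCompactSupport hfs.mul_right
  have hbound (x : X) : |f x * (f x - e x)| ≤ I / (C + 1) * |f x| := by
    rw [abs_mul, mul_comm]
    by_cases hx : x ∈ tsupport f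
    · exact mul_le_mul_of_nonneg_right (happrox x hx).le (abs_nonneg _)
    · simp [image_eq_zero_of_notMem_tsupport hx]
  have hIC : I ≤ I / (C + 1) * C := calc
    I = ∫ x, f x * (f x - e x) ∂μ := by
      simp only [mul_sub]
      rw [integral_sub (hint f hf) (hint e he), horth, sub_zero]
    _ ≤ ∫ x, |f x * (f x - e x)| ∂μ := (le_abs_self _).trans abs_integral_le_integral_abs
    _ ≤ ∫ x, I / (C + 1) * |f x| ∂μ := integral_mono_of_nonneg (ae_of_all _ fun _ ↦
        abs_nonneg _) ((hf.abs.integrable_of_hasCompactSupport hfs.abs).const_mul _)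
        (ae_of_all _ hbound)
    _ = I / (C + 1) * C := MeasureTheory.integral_const_mul _ _
  have hlt : I / (C + 1) * C < I := by
    rw [div_mul_eq_mul_div, div_lt_iff₀ (by positivity)]
    nlinarith
  linarith

/-- If `γ(s) = (s,0)` and `f` is continuous, compactly supported, even with respect to
reflection about the line `x₂ = 0`, and its circular transform centered on `γ` vanishes
identically, then `f ≡ 0`. -/
theorem circular_transform_even_injective
    (f : ℝ × ℝ → ℝ) (hc : Continuous f) (hsupp : HasCompactSupport f)
    (heven : ∀ x : ℝ × ℝ, f (x.1, -x.2) = f x)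
    (hR : ∀ r > (0:ℝ), ∀ s : ℝ,
      (∫ θ in (0:ℝ)..(2 * π), f (s + r * Real.cos θ, r * Real.sin θ) * r) = 0) :
    ∀ x : ℝ × ℝ, f x = 0 := by
  have hmean : ∫ y, f y = 0 := by simpa using integral_mul_radial_eq_zero hR (fun _ ↦ 1) 0
  have hexp : ∀ e ∈ expLinearSet, ∫ y, f y * e (y.1, y.1 ^ 2 + y.2 ^ 2) = 0 := by
    rintro _ ⟨a, b, hb, rfl⟩
    exact integral_mul_exp_eq_zero hR a hb.ne'
  refine congrFun (eq_zero_of_forall_integral_mul_eq_zero_of_approx (μ := volume) hc hsupp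
    fun ε hε ↦ ?_)
  obtain ⟨g, hg, happrox⟩ :=
    exists_mem_subalgebra_abs_sub_lt_of_even separatesPoints_adjoin_expLinearSet hc hsupp heven hε
  exact ⟨_, by fun_prop, integral_mul_comp_eq_zero_of_mem_adjoin hc hsupp (by fun_prop)
    (fun _ he _ he' ↦ expLinearSet_mul_mem he he') hmean hexp hg, happrox⟩
end

section
/- Define A₀(h) = arccos( (5/4 − (1/2+h)²) / (1 + 2h) ) for h ≥ 0 small. Then A₀(h) = √6·h^{1/2} − (7√6/12)·h^{3/2} + (1243√6/1440)·h^{5/2} + O(h^{7/2}) as h → 0⁺. -/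
/-!
`A₀(h) = arccos u(h)` with `1 - u(h) = h (3 + h) / (1 + 2h)`. For the candidate
`P(h) = √(6h) q(h)`, `q(h) = 1 - 7h/12 + 1243h²/1440`, the alternating Taylor bound for `cos`
gives `cos P(h) = 1 - 3hq² + (3/2)h²q⁴ - (3/10)h³q⁶ + O(h⁴)`, and the coefficients of `q` are
exactly those making this agree with `u(h)` up to `O(h⁴)`. Inverting `cos` costs a factor
`1/P(h) ≍ h^{-1/2}`: from `cos x - cos y = -2 sin((x+y)/2) sin((x-y)/2)` and Jordan's
inequality, `|x - y| (x + y) ≤ (π²/2) |cos x - cos y|` on `[0, π/2]`, so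
`A₀(h) - P(h) = O(h^{7/2})`.
-/

open Real Asymptotics Filter Topology Set Nat

lemma abs_cos_sub_sum_le {x : ℝ} (hx : x ^ 2 ≤ 2) (n : ℕ) :
    |cos x - ∑ i ∈ Finset.range n, (-1) ^ i * x ^ (2 * i) / (2 * i)!| ≤ x ^ (2 * n) / (2 * n)! := by
  have hf : Antitone fun i : ℕ => x ^ (2 * i) / (2 * i)! := by
    refine antitone_nat_of_succ_le fun i => ?_
    have hratio : x ^ 2 / ((2 * i + 2) * (2 * i + 1)) ≤ 1 :=
      div_le_one_of_le₀ (by nlinarith) (by positivity)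
    calc x ^ (2 * (i + 1)) / (2 * (i + 1))!
        = x ^ (2 * i) / (2 * i)! * (x ^ 2 / ((2 * i + 2) * (2 * i + 1))) := by
          rw [show 2 * (i + 1) = 2 * i + 1 + 1 by ring, Nat.factorial_succ, Nat.factorial_succ]
          push_cast; field_simp; ring
      _ ≤ x ^ (2 * i) / (2 * i)! :=
          mul_le_of_le_one_right (div_nonneg ((even_two_mul i).pow_nonneg x) (by positivity)) hratio
  rw [← (hasSum_cos x).tsum_eq]
  simpa only [mul_div_assoc] using
    alternating_series_error_bound _ hf (hasSum_cosh x).summable n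

lemma abs_cos_sub_taylor_le {x : ℝ} (hx : x ^ 2 ≤ 2) :
    |cos x - (1 - x ^ 2 / 2 + x ^ 4 / 24 - x ^ 6 / 720)| ≤ x ^ 8 / 40320 := by
  have h := abs_cos_sub_sum_le hx 4
  norm_num [Finset.sum_range_succ, Nat.factorial] at h
  convert h using 3; ring

lemma abs_sub_mul_add_le_abs_cos_sub_cos {x y : ℝ} (hx : x ∈ Icc 0 (π / 2))
    (hy : y ∈ Icc 0 (π / 2)) : |x - y| * (x + y) ≤ π ^ 2 / 2 * |cos x - cos y| := by
  obtain ⟨hx0, hx1⟩ := hx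
  obtain ⟨hy0, hy1⟩ := hy
  have hsum : 2 / π * ((x + y) / 2) ≤ |sin ((x + y) / 2)| := by
    simpa [abs_of_nonneg (by linarith : 0 ≤ (x + y) / 2)] using
      mul_abs_le_abs_sin (x := (x + y) / 2) (by rw [abs_le]; constructor <;> linarith)
  have hdiff : 2 / π * (|x - y| / 2) ≤ |sin ((x - y) / 2)| := by
    simpa [abs_div] using
      mul_abs_le_abs_sin (x := (x - y) / 2) (by rw [abs_le]; constructor <;> linarith)
  have hπ := pi_pos
  rw [cos_sub_cos, abs_mul, abs_mul, abs_neg, abs_two]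
  calc |x - y| * (x + y) = π ^ 2 * (2 / π * ((x + y) / 2) * (2 / π * (|x - y| / 2))) := by
        field_simp
    _ ≤ π ^ 2 * (|sin ((x + y) / 2)| * |sin ((x - y) / 2)|) := by gcongr
    _ = π ^ 2 / 2 * (2 * |sin ((x + y) / 2)| * |sin ((x - y) / 2)|) := by ring

lemma abs_arccos_sub_le {u y : ℝ} (hu : u ∈ Icc 0 1) (hy : y ∈ Ioc 0 (π / 2)) :
    |arccos u - y| ≤ π ^ 2 / 2 * |cos y - u| / y := by
  have hx : arccos u ∈ Icc 0 (π / 2) := ⟨arccos_nonneg u, arccos_le_pi_div_two.2 hu.1⟩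
  have key := abs_sub_mul_add_le_abs_cos_sub_cos hx (Ioc_subset_Icc_self hy)
  rw [cos_arccos (by linarith [hu.1]) hu.2, abs_sub_comm u] at key
  rw [le_div_iff₀ hy.1]
  calc |arccos u - y| * y ≤ |arccos u - y| * (arccos u + y) := by gcongr; linarith [hx.1]
    _ ≤ _ := key

lemma isBigO_mul_of_tendsto {α 𝕜 : Type*} [NormedField 𝕜] {l : Filter α} {f g : α → 𝕜} {c : 𝕜}
    (hg : Tendsto g l (𝓝 c)) : (fun x => f x * g x) =O[l] f := by
  simpa using (isBigO_refl f l).mul (hg.isBigO_one 𝕜)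

lemma rpow_natCast_add_half {x : ℝ} (hx : 0 ≤ x) (n : ℕ) :
    x ^ ((n : ℝ) + 1 / 2) = x ^ n * √x := by
  rw [rpow_add' hx (by positivity), rpow_natCast, sqrt_eq_rpow]

noncomputable def cosA0 (h : ℝ) : ℝ := (5 / 4 - (1 / 2 + h) ^ 2) / (1 + 2 * h)

noncomputable def corrA0 (h : ℝ) : ℝ := 1 - 7 / 12 * h + 1243 / 1440 * h ^ 2

noncomputable def approxA0 (h : ℝ) : ℝ := √6 * √h * corrA0 h

lemma approxA0_sq {h : ℝ} (hh : 0 ≤ h) : approxA0 h ^ 2 = 6 * h * corrA0 h ^ 2 := by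
  rw [approxA0, mul_pow, mul_pow, sq_sqrt (by norm_num), sq_sqrt hh]

lemma tendsto_corrA0 : Tendsto corrA0 (𝓝[>] 0) (𝓝 1) := by
  have : Continuous corrA0 := by unfold corrA0; fun_prop
  simpa [corrA0] using (this.tendsto 0).mono_left nhdsWithin_le_nhds

lemma tendsto_approxA0 : Tendsto approxA0 (𝓝[>] 0) (𝓝 0) := by
  have : Continuous approxA0 := by unfold approxA0 corrA0; fun_prop
  simpa [approxA0] using (this.tendsto 0).mono_left nhdsWithin_le_nhds

/-- The degree-6 Taylor polynomial of `cos` at `approxA0 h`, using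
`approxA0 h ^ 2 = 6 * h * corrA0 h ^ 2`. -/
noncomputable def taylorA0 (h : ℝ) : ℝ :=
  1 - 3 * h * corrA0 h ^ 2 + 3 / 2 * h ^ 2 * corrA0 h ^ 4 - 3 / 10 * h ^ 3 * corrA0 h ^ 6

lemma taylorA0_sub_cosA0_isBigO : (fun h => taylorA0 h - cosA0 h) =O[𝓝 0] (· ^ 4) := by
  -- `(taylorA0 h - cosA0 h) * (1 + 2 * h) = h ^ 4 * E h`
  set E : ℝ → ℝ := fun h => -22139 / 2880 + 6255959 / 691200 * h - 203677 / 15360 * h ^ 2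
    + 575623 / 32400 * h ^ 3 - 4691789599 / 248832000 * h ^ 4
    + 4890632099 / 238878720 * h ^ 5 - 49823532319919 / 2866544640000 * h ^ 6
    + 39788882095259 / 2866544640000 * h ^ 7 - 34299604199663 / 3439853568000 * h ^ 8
    + 539738090199187 / 95551488000000 * h ^ 9
    - 120626411295034931 / 41278242816000000 * h ^ 10
    + 26221679099789832791 / 29720334827520000000 * h ^ 11
    - 3688304528803752649 / 14860167413760000000 * h ^ 12
  have hE : Tendsto (fun h => E h / (1 + 2 * h)) (𝓝 0) (𝓝 (E 0 / (1 + 2 * 0))) :=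
    ((by fun_prop : Continuous E).continuousAt.div (by fun_prop) (by norm_num)).tendsto
  refine (isBigO_mul_of_tendsto hE).congr' ?_ EventuallyEq.rfl
  filter_upwards [Ioi_mem_nhds (show (-1 / 2 : ℝ) < 0 by norm_num)] with h hh
  have hden : 1 + 2 * h ≠ 0 := by linarith [hh.out]
  simp only [E, taylorA0, cosA0, corrA0]
  rw [← mul_div_assoc, div_eq_iff hden, sub_mul, div_mul_cancel₀ _ hden]
  ring

lemma cos_approxA0_sub_taylorA0_isBigO :
    (fun h => cos (approxA0 h) - taylorA0 h) =O[𝓝[>] 0] (· ^ 4) := by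
  have hsmall : ∀ᶠ h in 𝓝[>] (0:ℝ), approxA0 h ^ 2 ≤ 2 :=
    (tendsto_approxA0.pow 2).eventually (ge_mem_nhds (by norm_num))
  refine IsBigO.trans ?_ (isBigO_mul_of_tendsto (((tendsto_corrA0.pow 2).const_mul 6).pow 4
    |>.div_const 40320))
  refine IsBigO.of_bound' ?_
  filter_upwards [hsmall, self_mem_nhdsWithin] with h hP hh
  have hbound := abs_cos_sub_taylor_le hP
  rw [show approxA0 h ^ 4 = (approxA0 h ^ 2) ^ 2 by ring,
    show approxA0 h ^ 6 = (approxA0 h ^ 2) ^ 3 by ring,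
    show approxA0 h ^ 8 = (approxA0 h ^ 2) ^ 4 by ring, approxA0_sq hh.out.le] at hbound
  rw [Real.norm_eq_abs, Real.norm_of_nonneg (by positivity), taylorA0]
  convert hbound using 3 <;> ring

lemma cos_approxA0_sub_cosA0_isBigO :
    (fun h => cos (approxA0 h) - cosA0 h) =O[𝓝[>] 0] (· ^ 4) := by
  simpa using
    cos_approxA0_sub_taylorA0_isBigO.add (taylorA0_sub_cosA0_isBigO.mono nhdsWithin_le_nhds)

lemma eventually_cosA0_mem_Icc : ∀ᶠ h in 𝓝[>] 0, cosA0 h ∈ Icc 0 1 := by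
  have hcont : ContinuousAt cosA0 0 := by
    unfold cosA0; exact ContinuousAt.div (by fun_prop) (by fun_prop) (by norm_num)
  have hlim : Tendsto cosA0 (𝓝[>] 0) (𝓝 1) := by
    simpa [show cosA0 0 = 1 by norm_num [cosA0]] using hcont.tendsto.mono_left nhdsWithin_le_nhds
  filter_upwards [hlim.eventually (lt_mem_nhds one_pos), self_mem_nhdsWithin] with h hpos hh
  refine ⟨hpos.le, ?_⟩
  rw [cosA0, div_le_one (by linarith [hh.out])]
  nlinarith [hh.out]

lemma eventually_approxA0_mem_Icc : ∀ᶠ h in 𝓝[>] 0, approxA0 h ∈ Icc (√h) (π / 2) := by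
  filter_upwards [tendsto_corrA0.eventually (lt_mem_nhds (by norm_num : (1 / 2 : ℝ) < 1)),
    tendsto_approxA0.eventually (ge_mem_nhds (by positivity : (0 : ℝ) < π / 2))] with h hq hP
  refine ⟨?_, hP⟩
  have h6 : 2 ≤ √6 := le_sqrt_of_sq_le (by norm_num)
  calc √h = 1 * √h := (one_mul _).symm
    _ ≤ (√6 * corrA0 h) * √h := by gcongr; nlinarith
    _ = approxA0 h := by unfold approxA0; ring

lemma eventually_norm_arccos_cosA0_sub_approxA0_le : ∀ᶠ h in 𝓝[>] (0:ℝ),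
    ‖arccos (cosA0 h) - approxA0 h‖ ≤ π ^ 2 / 2 * ‖(cos (approxA0 h) - cosA0 h) * (√h)⁻¹‖ := by
  filter_upwards [eventually_cosA0_mem_Icc, eventually_approxA0_mem_Icc, self_mem_nhdsWithin]
    with h hu hP hh
  have hs : 0 < √h := sqrt_pos.2 hh
  calc ‖arccos (cosA0 h) - approxA0 h‖
      ≤ π ^ 2 / 2 * |cos (approxA0 h) - cosA0 h| / approxA0 h :=
        abs_arccos_sub_le hu ⟨hs.trans_le hP.1, hP.2⟩
    _ ≤ π ^ 2 / 2 * |cos (approxA0 h) - cosA0 h| / √h := by gcongr; exact hP.1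
    _ = _ := by rw [norm_mul, norm_inv, Real.norm_eq_abs, Real.norm_eq_abs, abs_of_pos hs]; ring

/-- `A₀(h) = arccos((5/4 − (1/2+h)²)/(1+2h)) = √6 h^{1/2} − (7√6/12) h^{3/2}
+ (1243√6/1440) h^{5/2} + O(h^{7/2})` as `h → 0⁺`. -/
theorem A0_expansion :
    (fun h : ℝ => Real.arccos ((5/4 - (1/2 + h) ^ 2) / (1 + 2 * h)) -
        (Real.sqrt 6 * h ^ ((1:ℝ)/2) - (7 * Real.sqrt 6 / 12) * h ^ ((3:ℝ)/2)
          + (1243 * Real.sqrt 6 / 1440) * h ^ ((5:ℝ)/2)))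
      =O[𝓝[>] (0:ℝ)] (fun h : ℝ => h ^ ((7:ℝ)/2)) := by
  have hrem := cos_approxA0_sub_cosA0_isBigO.mul (isBigO_refl (fun h => (√h)⁻¹) _)
  refine ((IsBigO.of_bound _ eventually_norm_arccos_cosA0_sub_approxA0_le).trans
    hrem).congr' ?_ ?_
  · filter_upwards [self_mem_nhdsWithin] with h hh
    rw [← sqrt_eq_rpow, show (3 : ℝ) / 2 = (1 : ℕ) + 1 / 2 by norm_num,
      show (5 : ℝ) / 2 = (2 : ℕ) + 1 / 2 by norm_num, rpow_natCast_add_half hh.out.le,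
      rpow_natCast_add_half hh.out.le]
    unfold cosA0 approxA0 corrA0
    ring
  · filter_upwards [self_mem_nhdsWithin] with h hh
    rw [show (7 : ℝ) / 2 = (3 : ℕ) + 1 / 2 by norm_num, rpow_natCast_add_half hh.out.le]
    have hsq : h ^ 4 = h ^ 3 * √h * √h := by rw [mul_assoc, mul_self_sqrt hh.out.le]; ring
    rw [hsq, mul_inv_cancel_right₀ (sqrt_pos.2 hh.out).ne']
end

section
/- Let Rf(1/2+h) = arccos(((1/2+h)² + 3/4)/(1+2h)) for h ≥ 0 small, and write Rf(1/2+h) = √h · ψ(h). Then ψ extends to a smooth (C^∞) function on a neighborhood of h = 0 with ψ(0) = √2, i.e., Rf has a square-root-type conormal singularity at h = 0 with leading coefficient √2. -/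
open Real Filter Topology ContDiff
open scoped ENNReal NNReal
set_option maxHeartbeats 1000000

/-- `arcsin` factors as `x * A (x^2)` near `0` with `A` smooth, `A 0 = 1`. -/
theorem arcsin_factor : ∃ A : ℝ → ℝ, ∃ r : ℝ, 0 < r ∧
    (∀ u ∈ Set.Ioo (-r) r, ContDiffAt ℝ (⊤ : ℕ∞) A u) ∧ A 0 = 1 ∧
    ∀ x : ℝ, x ^ 2 < r → Real.arcsin x = x * A (x ^ 2) := by
  have han : AnalyticAt ℝ Real.arcsin 0 :=
    (Real.contDiffAt_arcsin (by norm_num) (by norm_num) (n := ω)).analyticAt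
  obtain ⟨p, hp⟩ := han
  obtain ⟨r0, hball0⟩ := hp
  rcases ENNReal.lt_iff_exists_nnreal_btwn.mp hball0.r_pos with ⟨t, ht0, htr⟩
  have tpos : 0 < t := by exact_mod_cast ht0
  have hball : HasFPowerSeriesOnBall Real.arcsin p 0 ↑t := hball0.mono ht0 htr.le
  have hrad : (↑t : ℝ≥0∞) < p.radius := htr.trans_le hball0.r_le
  obtain ⟨C, hC0, hC⟩ := p.norm_mul_pow_le_of_lt_radius hrad
  set a : ℕ → ℝ := fun n => p.coeff n with ha
  have hCa : ∀ n, |a n| * (t : ℝ) ^ n ≤ C := by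
    intro n
    have := hC n
    rwa [FormalMultilinearSeries.norm_apply_eq_norm_coef, Real.norm_eq_abs] at this
  have tRpos : (0:ℝ) < (t:ℝ) := tpos
  -- HasSum representation of arcsin on the ball
  have hsum : ∀ x : ℝ, |x| < (t:ℝ) → HasSum (fun n => a n * x ^ n) (Real.arcsin x) := by
    intro x hx
    have hmem : x ∈ Metric.eball (0:ℝ) ↑t := by
      rw [Metric.mem_eball, edist_zero_right]
      exact_mod_cast (by rw [← NNReal.coe_lt_coe, coe_nnnorm, Real.norm_eq_abs]; exact hx : ‖x‖₊ < t)
    have := hball.hasSum hmem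
    simp only [zero_add] at this
    convert this using 2 with n
    · rfl
    rw [FormalMultilinearSeries.apply_eq_pow_smul_coeff, smul_eq_mul, mul_comm]
  set A : ℝ → ℝ := fun u => ∑' n, a (2*n+1) * u ^ n with hA
  -- summability of the A-series
  have hAsummable : ∀ u : ℝ, |u| < (t:ℝ)^2 → Summable (fun n => a (2*n+1) * u ^ n) := by
    intro u hu
    apply Summable.of_norm_bounded (g := fun n => (C / t) * (|u| / (t:ℝ)^2) ^ n)
    · apply Summable.mul_left
      apply summable_geometric_of_lt_one (by positivity)
      rw [div_lt_one (by positivity)]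
      exact hu
    · intro n
      have h1 : |a (2*n+1)| * (t:ℝ) ^ (2*n+1) ≤ C := hCa (2*n+1)
      have h2 : (t:ℝ) ^ (2*n+1) = t * ((t:ℝ)^2) ^ n := by ring
      rw [Real.norm_eq_abs, abs_mul, abs_pow]
      have h3 : (C / ↑t) * (|u| / (↑t:ℝ)^2) ^ n = (C * |u|^n) / ((↑t:ℝ)^(2*n+1)) := by
        rw [div_pow, div_mul_div_comm, h2]
      rw [h3, le_div_iff₀ (by positivity)]
      calc |a (2*n+1)| * |u|^n * (↑t:ℝ)^(2*n+1)
          = (|a (2*n+1)| * (↑t:ℝ)^(2*n+1)) * |u|^n := by ring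
        _ ≤ C * |u|^n := mul_le_mul_of_nonneg_right h1 (pow_nonneg (abs_nonneg u) n)
  have hAhasSum : ∀ u : ℝ, |u| < (t:ℝ)^2 → HasSum (fun n => a (2*n+1) * u ^ n) (A u) :=
    fun u hu => (hAsummable u hu).hasSum
  -- A is analytic on the ball of radius t^2
  set q : FormalMultilinearSeries ℝ ℝ ℝ :=
    FormalMultilinearSeries.ofScalars ℝ (fun n => a (2*n+1)) with hq
  have hballA : HasFPowerSeriesOnBall A q 0 ↑(t^2) := by
    refine ⟨?_, by exact_mod_cast pow_pos tpos 2, ?_⟩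
    · apply q.le_radius_of_bound (C / t)
      intro n
      have h1 : |a (2*n+1)| * (t:ℝ) ^ (2*n+1) ≤ C := hCa (2*n+1)
      have hnorm : ‖q n‖ = |a (2*n+1)| := by
        rw [hq, FormalMultilinearSeries.ofScalars_norm, Real.norm_eq_abs]
      rw [hnorm]
      rw [NNReal.coe_pow]
      rw [le_div_iff₀ tRpos]
      calc |a (2*n+1)| * ((t:ℝ)^2) ^ n * t = |a (2*n+1)| * (t:ℝ) ^ (2*n+1) := by ring
        _ ≤ C := h1
    · intro y hy
      have hy' : |y| < (t:ℝ)^2 := by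
        rw [Metric.mem_eball, edist_zero_right] at hy
        have : ‖y‖₊ < t^2 := by exact_mod_cast hy
        simpa [Real.norm_eq_abs] using (by exact_mod_cast this : ‖y‖ < ((t^2 : ℝ≥0):ℝ))
      simp only [zero_add]
      have := hAhasSum y hy'
      convert this using 2 with n
      · rfl
      rw [hq, FormalMultilinearSeries.ofScalars_apply_eq, smul_eq_mul]
  have hAsmooth : ∀ u ∈ Set.Ioo (-((t:ℝ)^2)) ((t:ℝ)^2), ContDiffAt ℝ (⊤ : ℕ∞) A u := by
    intro u hu
    have hu' : |u| < (t:ℝ)^2 := abs_lt.mpr ⟨hu.1, hu.2⟩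
    have hmem : u ∈ Metric.eball (0:ℝ) ↑(t^2) := by
      rw [Metric.mem_eball, edist_zero_right]
      exact_mod_cast (by rw [← NNReal.coe_lt_coe, coe_nnnorm, Real.norm_eq_abs, NNReal.coe_pow]; exact hu' : ‖u‖₊ < t^2)
    exact (hballA.analyticAt_of_mem hmem).contDiffAt
  -- A 0 = 1
  have hA0 : A 0 = 1 := by
    have h1 : A 0 = a 1 := by
      have he : A 0 = ∑' n, a (2*n+1) * (0:ℝ) ^ n := rfl
      rw [he, tsum_eq_single 0 (by intro n hn; simp [zero_pow hn])]
      norm_num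
    have h2 : a 1 = deriv Real.arcsin 0 := by
      rw [hball.hasFPowerSeriesAt.deriv]
      rfl
    rw [h1, h2, Real.deriv_arcsin]
    norm_num
  -- the factorization identity
  refine ⟨A, (t:ℝ)^2, by positivity, hAsmooth, hA0, ?_⟩
  intro x hx2
  have hx : |x| < (t:ℝ) := by
    rw [← sq_abs] at hx2
    by_contra h
    push_neg at h
    nlinarith [abs_nonneg x]
  have S1 := hsum x hx
  have S2 := hsum (-x) (by rwa [abs_neg])
  rw [Real.arcsin_neg] at S2
  have S3 := S1.sub S2
  have SA := hAhasSum (x^2) (by rw [abs_of_nonneg (sq_nonneg x)]; exact hx2)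
  have SO := SA.mul_left (2*x)
  have SE : HasSum (fun k => a (2*k) * x ^ (2*k) - a (2*k) * (-x) ^ (2*k)) 0 := by
    convert hasSum_zero with k
    rw [Even.neg_pow (even_two_mul k)]
    ring
  have Sodd : HasSum (fun k => a (2*k+1) * x ^ (2*k+1) - a (2*k+1) * (-x) ^ (2*k+1))
      (2*x * A (x^2)) := by
    convert SO using 2 with k
    · rfl
    rw [Odd.neg_pow ⟨k, by ring⟩]
    rw [← pow_mul]
    ring
  have Total := HasSum.even_add_odd (f := fun n => a n * x ^ n - a n * (-x) ^ n) SE Sodd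
  have := S3.unique Total
  linarith

theorem arccos_eq_two_arcsin {x : ℝ} (h1 : -1 ≤ x) (h2 : x ≤ 1) :
    Real.arccos x = 2 * Real.arcsin (Real.sqrt ((1 - x) / 2)) := by
  set s := Real.sqrt ((1 - x) / 2) with hs
  have hs0 : 0 ≤ s := Real.sqrt_nonneg _
  have hsle : s ≤ 1 := Real.sqrt_le_one.mpr (by linarith)
  set y := Real.arcsin s with hy
  have hy0 : 0 ≤ y := Real.arcsin_nonneg.mpr hs0
  have hy2 : y ≤ π / 2 := Real.arcsin_le_pi_div_two s
  have hsin : Real.sin y = s := Real.sin_arcsin (by linarith) hsle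
  have hsq : Real.sin y ^ 2 = (1 - x) / 2 := by
    rw [hsin, hs, Real.sq_sqrt (by linarith)]
  have hcos : Real.cos (2 * y) = x := by
    have hpyth := Real.sin_sq_add_cos_sq y
    rw [Real.cos_two_mul]
    nlinarith
  rw [← hcos, Real.arccos_cos (by linarith) (by linarith)]

/-- `Rf(1/2+h) = arccos(((1/2+h)²+3/4)/(1+2h))` has a square-root-type conormal
singularity at `h = 0`: `Rf(1/2+h) = √h · ψ(h)` with `ψ` smooth near `0`, `ψ(0) = √2`. -/
theorem sqrt_type_singularity :
    ∃ ψ : ℝ → ℝ, ∃ δ > (0:ℝ), ContDiffOn ℝ (⊤ : ℕ∞) ψ (Set.Ioo (-δ) δ) ∧ ψ 0 = Real.sqrt 2 ∧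
      ∀ h ∈ Set.Ico (0:ℝ) δ,
        Real.arccos (((1/2 + h) ^ 2 + 3/4) / (1 + 2 * h)) = Real.sqrt h * ψ h := by
  obtain ⟨A, r, hr, hAsmooth, hA0, hAfac⟩ := arcsin_factor
  set g : ℝ → ℝ := fun h => Real.sqrt ((1 - h) / (2 * (1 + 2 * h))) with hg
  set δ : ℝ := min (1/8) r with hδ
  have hδ0 : 0 < δ := lt_min (by norm_num) hr
  have hδ8 : δ ≤ 1/8 := min_le_left _ _
  have hδr : δ ≤ r := min_le_right _ _
  -- basic facts for |h| < 1/8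
  have key : ∀ h : ℝ, |h| < 1/8 →
      0 < 1 + 2 * h ∧ 0 < (1 - h) / (2 * (1 + 2 * h)) ∧
      g h ^ 2 = (1 - h) / (2 * (1 + 2 * h)) ∧ g h ^ 2 ≤ 1 := by
    intro h hh
    rw [abs_lt] at hh
    have hd : 0 < 1 + 2 * h := by linarith
    have harg : 0 < (1 - h) / (2 * (1 + 2 * h)) := by
      apply div_pos (by linarith) (by linarith)
    have hg2 : g h ^ 2 = (1 - h) / (2 * (1 + 2 * h)) := Real.sq_sqrt harg.le
    refine ⟨hd, harg, hg2, ?_⟩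
    rw [hg2, div_le_one (by linarith)]
    linarith
  refine ⟨fun h => 2 * g h * A (h * g h ^ 2), δ, hδ0, ?_, ?_, ?_⟩
  · -- smoothness
    intro h hh
    have hh8 : |h| < 1/8 := by
      rw [abs_lt]
      constructor <;> [linarith [hh.1, hδ8]; linarith [hh.2, hδ8]]
    obtain ⟨hd, harg, hg2, hgle⟩ := key h hh8
    have hbound : |h * g h ^ 2| < r := by
      rw [abs_mul, abs_of_nonneg (by rw [hg2]; exact harg.le : 0 ≤ g h ^ 2)]
      have : |h| * g h ^ 2 ≤ |h| * 1 :=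
        mul_le_mul_of_nonneg_left hgle (abs_nonneg h)
      have hhr : |h| < r := lt_of_lt_of_le (abs_lt.mpr ⟨by linarith [hh.1], by linarith [hh.2]⟩) hδr
      nlinarith [abs_nonneg h]
    have hinner : ContDiffAt ℝ (⊤ : ℕ∞) (fun h : ℝ => (1 - h) / (2 * (1 + 2 * h))) h := by
      apply ContDiffAt.div
      · exact contDiffAt_const.sub contDiffAt_id
      · exact contDiffAt_const.mul (contDiffAt_const.add (contDiffAt_const.mul contDiffAt_id))
      · positivity
    have hgd : ContDiffAt ℝ (⊤ : ℕ∞) g h := hinner.sqrt harg.ne'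
    have hxd : ContDiffAt ℝ (⊤ : ℕ∞) (fun h : ℝ => h * g h ^ 2) h :=
      contDiffAt_id.mul (hgd.pow 2)
    have hAc : ContDiffAt ℝ (⊤ : ℕ∞) A (h * g h ^ 2) := by
      have := abs_lt.mp hbound
      exact hAsmooth _ ⟨this.1, this.2⟩
    exact ((contDiffAt_const.mul hgd).mul (hAc.comp h hxd)).contDiffWithinAt
  · -- value at 0
    have hg0 : g 0 = Real.sqrt (1/2) := by
      rw [hg]; norm_num
    have hA00 : A ((0:ℝ) * g 0 ^ 2) = 1 := by rw [zero_mul, hA0]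
    show 2 * g 0 * A (0 * g 0 ^ 2) = Real.sqrt 2
    rw [hA00, mul_one, hg0]
    have hsq : (2 * Real.sqrt (1/2)) ^ 2 = 2 := by
      rw [mul_pow, Real.sq_sqrt (by norm_num : (0:ℝ) ≤ 1/2)]
      norm_num
    calc 2 * Real.sqrt (1/2) = Real.sqrt ((2 * Real.sqrt (1/2)) ^ 2) :=
          (Real.sqrt_sq (by positivity)).symm
      _ = Real.sqrt 2 := by rw [hsq]
  · -- the identity
    rintro h ⟨h0, hhδ⟩
    have hh8 : |h| < 1/8 := by
      rw [abs_lt]; constructor <;> linarith [hδ8]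
    obtain ⟨hd, harg, hg2, hgle⟩ := key h hh8
    set x := ((1/2 + h) ^ 2 + 3/4) / (1 + 2 * h) with hx
    have hq1 : (1 - x) / 2 = h * g h ^ 2 := by
      rw [hx, hg2]
      field_simp
      ring
    have hx1 : x ≤ 1 := by
      have : 0 ≤ (1 - x) / 2 := by
        rw [hq1]
        exact mul_nonneg h0 (by rw [hg2]; exact harg.le)
      linarith
    have hxm1 : -1 ≤ x := by
      have : 0 ≤ x := by
        rw [hx]
        apply div_nonneg (by positivity) (by linarith)
      linarith
    rw [arccos_eq_two_arcsin hxm1 hx1, hq1]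
    have hgnn : 0 ≤ g h := Real.sqrt_nonneg _
    have hsqrt : Real.sqrt (h * g h ^ 2) = Real.sqrt h * g h := by
      rw [Real.sqrt_mul h0, Real.sqrt_sq hgnn]
    rw [hsqrt]
    have hxsq : (Real.sqrt h * g h) ^ 2 = h * g h ^ 2 := by
      rw [mul_pow, Real.sq_sqrt h0]
    have hlt : (Real.sqrt h * g h) ^ 2 < r := by
      rw [hxsq]
      have h1 : h * g h ^ 2 ≤ h * 1 := mul_le_mul_of_nonneg_left hgle h0
      linarith [lt_of_lt_of_le hhδ hδr]
    rw [hAfac _ hlt, hxsq]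
    ring
end
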